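/- The number of almost (m|n)-cross bipartitions is the binomial coefficient C(m+n+2, m+1). -/
import Mathlib


/-- A partition, 0-indexed: `f i` is the part in row `i+1`. -/
def IsPartition (f : ℕ → ℕ) : Prop :=
  (∀ i, f (i + 1) ≤ f i) ∧ (∃ N, ∀ i ≥ N, f i = 0)

/-- A bipartition `(f, g)` is `(m|n)`-cross if `λ•_{k+1} + λ°_{m−k+1} ≤ n`
for some `0 ≤ k ≤ m` (0-indexed: `f k + g (m − k) ≤ n`). -/
def Cross (m n : ℕ) (f g : ℕ → ℕ) : Prop := ∃ k ≤ m, f k + g (m - k) ≤ n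

/-- Componentwise containment of bipartitions. -/
def Contained (f g f' g' : ℕ → ℕ) : Prop := (∀ i, f i ≤ f' i) ∧ (∀ i, g i ≤ g' i)

/-- A bipartition is almost `(m|n)`-cross if it is not `(m|n)`-cross but every
strictly contained bipartition is `(m|n)`-cross. -/
def AlmostCross (m n : ℕ) (f g : ℕ → ℕ) : Prop :=
  ¬ Cross m n f g ∧
    ∀ f' g' : ℕ → ℕ, IsPartition f' → IsPartition g' → Contained f' g' f g →
      (f', g') ≠ (f, g) → Cross m n f' g'

lemma IsPartition.anti {f : ℕ → ℕ} (hf : IsPartition f) : Antitone f :=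
  antitone_nat_of_succ_le hf.1

/-- Characterization of almost-cross bipartitions. -/
lemma almostCross_iff {m n : ℕ} {f g : ℕ → ℕ} (hf : IsPartition f) (hg : IsPartition g) :
    AlmostCross m n f g ↔
      ((∀ i, m < i → f i = 0) ∧ (∀ i, m < i → g i = 0) ∧
        ∀ k ≤ m, f k + g (m - k) = n + 1) := by
  classical
  constructor
  · rintro ⟨hNC, hmin⟩
    have hge : ∀ k ≤ m, n + 1 ≤ f k + g (m - k) := by
      intro k hk
      by_contra hlt
      exact hNC ⟨k, hk, by omega⟩
    have hf0 : ∀ i, m < i → f i = 0 := by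
      have key : f (m + 1) = 0 := by
        by_contra hpos
        set f' : ℕ → ℕ := fun i => if i ≤ m then f i else 0 with hf'
        have hP : IsPartition f' := by
          constructor
          · intro i
            by_cases h1 : i + 1 ≤ m
            · simp only [hf', if_pos h1, if_pos (by omega : i ≤ m)]
              exact hf.1 i
            · simp only [hf', if_neg h1]
              exact Nat.zero_le _
          · exact ⟨m + 1, fun i hi => by simp only [hf', if_neg (by omega : ¬ i ≤ m)]⟩
        have hC := hmin f' g hP hg
          ⟨fun i => by by_cases h1 : i ≤ m <;> simp [hf', h1], fun i => le_rfl⟩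
          (by
            intro he
            apply hpos
            have h2 := congrArg (fun q => q.1 (m + 1)) he
            simpa only [hf', if_neg (by omega : ¬ m + 1 ≤ m)] using h2.symm)
        obtain ⟨k, hk, hle⟩ := hC
        exact hNC ⟨k, hk, by simpa only [hf', if_pos hk] using hle⟩
      intro i hi
      have := hf.anti (by omega : m + 1 ≤ i)
      omega
    have hg0 : ∀ i, m < i → g i = 0 := by
      have key : g (m + 1) = 0 := by
        by_contra hpos
        set g' : ℕ → ℕ := fun i => if i ≤ m then g i else 0 with hg'
        have hP : IsPartition g' := by
          constructor
          · intro i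
            by_cases h1 : i + 1 ≤ m
            · simp only [hg', if_pos h1, if_pos (by omega : i ≤ m)]
              exact hg.1 i
            · simp only [hg', if_neg h1]
              exact Nat.zero_le _
          · exact ⟨m + 1, fun i hi => by simp only [hg', if_neg (by omega : ¬ i ≤ m)]⟩
        have hC := hmin f g' hf hP
          ⟨fun i => le_rfl, fun i => by by_cases h1 : i ≤ m <;> simp [hg', h1]⟩
          (by
            intro he
            apply hpos
            have h2 := congrArg (fun q => q.2 (m + 1)) he
            simpa only [hg', if_neg (by omega : ¬ m + 1 ≤ m)] using h2.symm)
        obtain ⟨k, hk, hle⟩ := hC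
        exact hNC ⟨k, hk, by simpa only [hg', if_pos (by omega : m - k ≤ m)] using hle⟩
      intro i hi
      have := hg.anti (by omega : m + 1 ≤ i)
      omega
    refine ⟨hf0, hg0, fun k hk => ?_⟩
    refine le_antisymm ?_ (hge k hk)
    by_contra hbig
    push_neg at hbig
    by_cases hfk : 0 < f k
    · -- decrease f at the last position with value f k
      obtain ⟨N, hN⟩ := hf.2
      have hex : ∃ d, f (k + d) < f k := ⟨N, by rw [hN (k + N) (by omega)]; omega⟩
      set d0 := Nat.find hex with hd0
      have hspec : f (k + d0) < f k := Nat.find_spec hex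
      have hd0pos : d0 ≠ 0 := by
        intro h0
        rw [h0, Nat.add_zero] at hspec
        exact lt_irrefl _ hspec
      set t := k + d0 - 1 with ht
      have htk : k ≤ t := by omega
      have hft : f t = f k := by
        have h1 : ¬ f (k + (d0 - 1)) < f k := Nat.find_min hex (by omega)
        have h2 : f t ≤ f k := hf.anti htk
        have h4 : t = k + (d0 - 1) := by omega
        rw [h4] at h2 ⊢
        omega
      have hft1 : f (t + 1) < f k := by
        have h3 : t + 1 = k + d0 := by omega
        rw [h3]; exact hspec
      set f' : ℕ → ℕ := fun i => if i = t then f k - 1 else f i with hf'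
      have hP : IsPartition f' := by
        constructor
        · intro i
          rcases eq_or_ne (i + 1) t with h1 | h1
          · have h2 : i ≠ t := by omega
            simp only [hf', if_pos h1, if_neg h2]
            have h3 : f t ≤ f i := hf.anti (by omega)
            omega
          · rcases eq_or_ne i t with h2 | h2
            · subst h2
              simp only [hf', if_neg h1, if_pos rfl]
              omega
            · simp only [hf', if_neg h1, if_neg h2]
              exact hf.1 i
        · exact ⟨N + t + 1, fun i hi => by
            simp only [hf', if_neg (by omega : ¬ i = t)]
            exact hN i (by omega)⟩
      have hC := hmin f' g hP hg
        ⟨fun i => by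
            rcases eq_or_ne i t with h | h
            · subst h
              simp only [hf', if_pos rfl]
              omega
            · simp [hf', h],
          fun i => le_rfl⟩
        (by
          intro he
          have h2 := congrArg (fun q => q.1 t) he
          simp only [hf', if_pos rfl] at h2
          omega)
      obtain ⟨k', hk', hle'⟩ := hC
      rcases eq_or_ne k' t with h | h
      · subst h
        simp only [hf', if_pos rfl] at hle'
        have h1 : g (m - k) ≤ g (m - t) := hg.anti (by omega)
        omega
      · simp only [hf', if_neg h] at hle'
        exact hNC ⟨k', hk', hle'⟩
    · -- f k = 0, so g (m - k) is big; decrease g instead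
      have hgk : 0 < g (m - k) := by omega
      obtain ⟨N, hN⟩ := hg.2
      have hex : ∃ d, g ((m - k) + d) < g (m - k) :=
        ⟨N, by rw [hN ((m - k) + N) (by omega)]; omega⟩
      set d0 := Nat.find hex with hd0
      have hspec : g ((m - k) + d0) < g (m - k) := Nat.find_spec hex
      have hd0pos : d0 ≠ 0 := by
        intro h0
        rw [h0, Nat.add_zero] at hspec
        exact lt_irrefl _ hspec
      set t := (m - k) + d0 - 1 with ht
      have htk : m - k ≤ t := by omega
      have hgt : g t = g (m - k) := by
        have h1 : ¬ g ((m - k) + (d0 - 1)) < g (m - k) := Nat.find_min hex (by omega)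
        have h2 : g t ≤ g (m - k) := hg.anti htk
        have h4 : t = (m - k) + (d0 - 1) := by omega
        rw [h4] at h2 ⊢
        omega
      have hgt1 : g (t + 1) < g (m - k) := by
        have h3 : t + 1 = (m - k) + d0 := by omega
        rw [h3]; exact hspec
      set g' : ℕ → ℕ := fun i => if i = t then g (m - k) - 1 else g i with hg'
      have hP : IsPartition g' := by
        constructor
        · intro i
          rcases eq_or_ne (i + 1) t with h1 | h1
          · have h2 : i ≠ t := by omega
            simp only [hg', if_pos h1, if_neg h2]
            have h3 : g t ≤ g i := hg.anti (by omega)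
            omega
          · rcases eq_or_ne i t with h2 | h2
            · subst h2
              simp only [hg', if_neg h1, if_pos rfl]
              omega
            · simp only [hg', if_neg h1, if_neg h2]
              exact hg.1 i
        · exact ⟨N + t + 1, fun i hi => by
            simp only [hg', if_neg (by omega : ¬ i = t)]
            exact hN i (by omega)⟩
      have hC := hmin f g' hf hP
        ⟨fun i => le_rfl,
          fun i => by
            rcases eq_or_ne i t with h | h
            · subst h
              simp only [hg', if_pos rfl]
              omega
            · simp [hg', h]⟩
        (by
          intro he
          have h2 := congrArg (fun q => q.2 t) he
          simp only [hg', if_pos rfl] at h2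
          omega)
      obtain ⟨k', hk', hle'⟩ := hC
      rcases eq_or_ne (m - k') t with h | h
      · simp only [hg'] at hle'
        rw [if_pos h] at hle'
        omega
      · simp only [hg', if_neg h] at hle'
        exact hNC ⟨k', hk', hle'⟩
  · rintro ⟨h1, h2, h3⟩
    constructor
    · rintro ⟨k, hk, hle⟩
      have := h3 k hk
      omega
    · rintro f' g' hf' hg' ⟨hcf, hcg⟩ hne
      have hex : (∃ i, f' i < f i) ∨ (∃ i, g' i < g i) := by
        by_contra hno
        push_neg at hno
        apply hne
        have e1 : f' = f := funext fun i => le_antisymm (hcf i) (hno.1 i)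
        have e2 : g' = g := funext fun i => le_antisymm (hcg i) (hno.2 i)
        rw [e1, e2]
      rcases hex with ⟨i, hi⟩ | ⟨i, hi⟩
      · have him : i ≤ m := by
          by_contra hgt
          rw [h1 i (by omega)] at hi
          omega
        refine ⟨i, him, ?_⟩
        have ha := h3 i him
        have hb := hcg (m - i)
        omega
      · have him : i ≤ m := by
          by_contra hgt
          rw [h2 i (by omega)] at hi
          omega
        refine ⟨m - i, by omega, ?_⟩
        have hmi : m - (m - i) = i := by omega
        rw [hmi]
        have ha := h3 (m - i) (by omega)
        rw [hmi] at ha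
        have hb := hcf (m - i)
        omega

/-- Strictly monotone `ℕ`-valued functions on `Fin N` grow at least by steps. -/
lemma sm_gap {N : ℕ} {v : Fin N → ℕ} (hv : StrictMono v) :
    ∀ (d : ℕ) (a : Fin N) (hb : (a : ℕ) + d < N), v a + d ≤ v ⟨(a : ℕ) + d, hb⟩ := by
  intro d
  induction d with
  | zero =>
    intro a hb
    have h : (⟨(a : ℕ) + 0, hb⟩ : Fin N) = a := Fin.ext (by simp)
    rw [h]
    omega
  | succ d ih =>
    intro a hb
    have h1 := ih a (by omega)
    have h2 : v ⟨(a : ℕ) + d, by omega⟩ < v ⟨(a : ℕ) + (d + 1), hb⟩ := by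
      apply hv
      simp only [Fin.lt_def]
      omega
    omega

/-- The bipartition associated to a monotone `h : Fin (m+1) → Fin (n+2)`: first component. -/
def Fmap (m n : ℕ) (h : Fin (m + 1) → Fin (n + 2)) : ℕ → ℕ :=
  fun k => if hk : k ≤ m then (h ⟨m - k, by omega⟩ : ℕ) else 0

/-- Second component. -/
def Gmap (m n : ℕ) (h : Fin (m + 1) → Fin (n + 2)) : ℕ → ℕ :=
  fun j => if hj : j ≤ m then n + 1 - (h ⟨j, by omega⟩ : ℕ) else 0

lemma Fmap_isPartition {m n : ℕ} {h : Fin (m + 1) → Fin (n + 2)} (mh : Monotone h) :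
    IsPartition (Fmap m n h) := by
  constructor
  · intro k
    by_cases h1 : k + 1 ≤ m
    · simp only [Fmap, dif_pos h1, dif_pos (by omega : k ≤ m)]
      exact mh (by simp only [Fin.le_def]; omega)
    · simp only [Fmap, dif_neg h1]
      exact Nat.zero_le _
  · exact ⟨m + 1, fun i hi => by simp only [Fmap, dif_neg (by omega : ¬ i ≤ m)]⟩

lemma Gmap_isPartition {m n : ℕ} {h : Fin (m + 1) → Fin (n + 2)} (mh : Monotone h) :
    IsPartition (Gmap m n h) := by
  constructor
  · intro j
    by_cases h1 : j + 1 ≤ m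
    · simp only [Gmap, dif_pos h1, dif_pos (by omega : j ≤ m)]
      have := mh (show (⟨j, by omega⟩ : Fin (m + 1)) ≤ ⟨j + 1, by omega⟩ by
        simp only [Fin.le_def]; omega)
      simp only [Fin.le_def] at this
      omega
    · simp only [Gmap, dif_neg h1]
      exact Nat.zero_le _
  · exact ⟨m + 1, fun i hi => by simp only [Gmap, dif_neg (by omega : ¬ i ≤ m)]⟩

lemma FGmap_sum {m n : ℕ} (h : Fin (m + 1) → Fin (n + 2)) :
    ∀ k ≤ m, Fmap m n h k + Gmap m n h (m - k) = n + 1 := by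
  intro k hk
  have hmk : m - k ≤ m := by omega
  simp only [Fmap, Gmap, dif_pos hk, dif_pos hmk]
  have h3 : (h ⟨m - k, by omega⟩ : ℕ) < n + 2 := (h ⟨m - k, by omega⟩).isLt
  omega

/-- there are exactly `C(m+n+2, m+1)` almost `(m|n)`-cross bipartitions. -/
theorem almostCross_count (m n : ℕ) :
    {p : (ℕ → ℕ) × (ℕ → ℕ) |
      IsPartition p.1 ∧ IsPartition p.2 ∧ AlmostCross m n p.1 p.2}.ncard =
      Nat.choose (m + n + 2) (m + 1) := by
  classical
  rw [← Nat.card_coe_set_eq]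
  -- Step 1: biject with monotone maps `Fin (m+1) → Fin (n+2)`
  let Φ : {h : Fin (m + 1) → Fin (n + 2) // Monotone h} →
      {p : (ℕ → ℕ) × (ℕ → ℕ) //
        IsPartition p.1 ∧ IsPartition p.2 ∧ AlmostCross m n p.1 p.2} :=
    fun h => ⟨(Fmap m n h.1, Gmap m n h.1),
      Fmap_isPartition h.2, Gmap_isPartition h.2,
      (almostCross_iff (Fmap_isPartition h.2) (Gmap_isPartition h.2)).mpr
        ⟨fun i hi => by simp only [Fmap, dif_neg (by omega : ¬ i ≤ m)],
         fun i hi => by simp only [Gmap, dif_neg (by omega : ¬ i ≤ m)],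
         FGmap_sum h.1⟩⟩
  have hΦ : Function.Bijective Φ := by
    constructor
    · rintro ⟨h, mh⟩ ⟨h', mh'⟩ heq
      have hF : Fmap m n h = Fmap m n h' := congrArg (fun q => q.1.1) heq
      apply Subtype.ext
      funext i
      have hi : (i : ℕ) ≤ m := by omega
      have h1 := congrFun hF (m - i)
      simp only [Fmap, dif_pos (by omega : m - (i : ℕ) ≤ m)] at h1
      have h2 : (⟨m - (m - (i : ℕ)), by omega⟩ : Fin (m + 1)) = i := Fin.ext (by simp; omega)
      rw [h2] at h1
      exact Fin.ext h1
    · rintro ⟨⟨f, g⟩, hf, hg, hac⟩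
      replace hf : IsPartition f := hf
      replace hg : IsPartition g := hg
      replace hac : AlmostCross m n f g := hac
      obtain ⟨hz1, hz2, hsum⟩ := (almostCross_iff hf hg).mp hac
      have hbound : ∀ i : Fin (m + 1), f (m - (i : ℕ)) < n + 2 := by
        intro i
        have := hsum (m - (i : ℕ)) (by omega)
        omega
      refine ⟨⟨fun i => ⟨f (m - (i : ℕ)), hbound i⟩, ?_⟩, ?_⟩
      · intro a b hab
        simp only [Fin.le_def]
        exact hf.anti (by simp only [Fin.le_def] at hab; omega)
      · apply Subtype.ext
        show (Fmap m n (fun i => ⟨f (m - (i : ℕ)), hbound i⟩),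
          Gmap m n (fun i => ⟨f (m - (i : ℕ)), hbound i⟩)) = (f, g)
        refine Prod.ext ?_ ?_
        · funext k
          by_cases hk : k ≤ m
          · simp only [Fmap, dif_pos hk]
            congr 1
            omega
          · simp only [Fmap, dif_neg hk]
            exact (hz1 k (by omega)).symm
        · funext j
          by_cases hj : j ≤ m
          · simp only [Gmap, dif_pos hj]
            have := hsum (m - j) (by omega)
            have hmj : m - (m - j) = j := by omega
            rw [hmj] at this
            show n + 1 - f (m - j) = g j
            omega
          · simp only [Gmap, dif_neg hj]
            exact (hz2 j (by omega)).symm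
  -- Step 2: biject monotone maps with (m+1)-subsets of `Fin (m+n+2)`
  let Ψ : {h : Fin (m + 1) → Fin (n + 2) // Monotone h} →
      {s : Finset (Fin (m + n + 2)) // s.card = m + 1} :=
    fun h => ⟨Finset.image
        (fun j : Fin (m + 1) =>
          (⟨(h.1 j : ℕ) + j, by have := (h.1 j).isLt; have := j.isLt; omega⟩ :
            Fin (m + n + 2))) Finset.univ, by
      rw [Finset.card_image_of_injective _ ?_, Finset.card_univ, Fintype.card_fin]
      intro a b hab
      by_contra hne
      rcases Ne.lt_or_gt hne with hl | hl
      · have := h.2 hl.le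
        simp only [Fin.le_def] at this
        simp only [Fin.mk.injEq] at hab
        simp only [Fin.lt_def] at hl
        omega
      · have := h.2 hl.le
        simp only [Fin.le_def] at this
        simp only [Fin.mk.injEq] at hab
        simp only [Fin.lt_def] at hl
        omega⟩
  have hΨ : Function.Bijective Ψ := by
    constructor
    · rintro ⟨h, mh⟩ ⟨h', mh'⟩ heq
      have hset := congrArg Subtype.val heq
      simp only [Ψ] at hset
      -- both enumerations are strictly monotone with the same image
      set s : Finset (Fin (m + n + 2)) := Finset.image
        (fun j : Fin (m + 1) =>
          (⟨(h j : ℕ) + j, by have := (h j).isLt; have := j.isLt; omega⟩ :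
            Fin (m + n + 2))) Finset.univ with hs
      have hscard : s.card = m + 1 := (Ψ ⟨h, mh⟩).2
      have hsm : StrictMono (fun j : Fin (m + 1) =>
          (⟨(h j : ℕ) + j, by have := (h j).isLt; have := j.isLt; omega⟩ :
            Fin (m + n + 2))) := by
        intro a b hab
        have := mh hab.le
        simp only [Fin.le_def] at this
        simp only [Fin.lt_def] at hab ⊢
        omega
      have hsm' : StrictMono (fun j : Fin (m + 1) =>
          (⟨(h' j : ℕ) + j, by have := (h' j).isLt; have := j.isLt; omega⟩ :
            Fin (m + n + 2))) := by
        intro a b hab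
        have := mh' hab.le
        simp only [Fin.le_def] at this
        simp only [Fin.lt_def] at hab ⊢
        omega
      have e1 := Finset.orderEmbOfFin_unique hscard
        (f := fun j : Fin (m + 1) =>
          (⟨(h j : ℕ) + j, by have := (h j).isLt; have := j.isLt; omega⟩ :
            Fin (m + n + 2)))
        (fun x => Finset.mem_image_of_mem _ (Finset.mem_univ x)) hsm
      have e2 := Finset.orderEmbOfFin_unique hscard
        (f := fun j : Fin (m + 1) =>
          (⟨(h' j : ℕ) + j, by have := (h' j).isLt; have := j.isLt; omega⟩ :
            Fin (m + n + 2)))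
        (fun x => by rw [hset]; exact Finset.mem_image_of_mem _ (Finset.mem_univ x)) hsm'
      apply Subtype.ext
      show h = h'
      funext j
      have := congrFun (e1.trans e2.symm) j
      simp only [Fin.mk.injEq] at this
      exact Fin.ext (by omega)
    · rintro ⟨s, hscard⟩
      set e := s.orderEmbOfFin hscard with he
      have hv : StrictMono (fun j : Fin (m + 1) => ((e j : Fin (m + n + 2)) : ℕ)) := by
        intro a b hab
        exact e.strictMono hab
      have lb : ∀ j : Fin (m + 1), (j : ℕ) ≤ (e j : ℕ) := by
        intro j
        have h0 := sm_gap hv (j : ℕ) ⟨0, by omega⟩ (by simp only [Nat.zero_add]; exact j.isLt)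
        have h1 : (⟨(0 : ℕ) + (j : ℕ), by simp only [Nat.zero_add]; exact j.isLt⟩ : Fin (m + 1)) = j :=
          Fin.ext (by simp)
        rw [h1] at h0
        omega
      have ub : ∀ j : Fin (m + 1), (e j : ℕ) ≤ n + 1 + (j : ℕ) := by
        intro j
        have h0 := sm_gap hv (m - (j : ℕ)) j (by omega)
        have h1 : (e ⟨(j : ℕ) + (m - (j : ℕ)), by omega⟩ : ℕ) < m + n + 2 :=
          (e ⟨(j : ℕ) + (m - (j : ℕ)), by omega⟩).isLt
        omega
      have hmono : Monotone (fun j : Fin (m + 1) =>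
          (⟨(e j : ℕ) - (j : ℕ), by have := ub j; omega⟩ : Fin (n + 2))) := by
        intro a b hab
        simp only [Fin.le_def]
        have h0 := sm_gap hv ((b : ℕ) - (a : ℕ)) a (by have := b.isLt; omega)
        have h1 : (⟨(a : ℕ) + ((b : ℕ) - (a : ℕ)), by have := b.isLt; omega⟩ : Fin (m + 1)) = b :=
          Fin.ext (by simp only [Fin.le_def] at hab; simp; omega)
        rw [h1] at h0
        have := lb a
        omega
      refine ⟨⟨fun j => ⟨(e j : ℕ) - (j : ℕ), by have := ub j; omega⟩, hmono⟩, ?_⟩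
      apply Subtype.ext
      simp only [Ψ]
      have himg : (fun j : Fin (m + 1) =>
          (⟨(e j : ℕ) - (j : ℕ) + (j : ℕ), by have := ub j; have := j.isLt; omega⟩ :
            Fin (m + n + 2))) = fun j => e j := by
        funext j
        exact Fin.ext (by have := lb j; simp; omega)
      rw [himg]
      apply Finset.coe_injective
      rw [Finset.coe_image, Finset.coe_univ, Set.image_univ]
      exact Finset.range_orderEmbOfFin s hscard
  calc Nat.card {p : (ℕ → ℕ) × (ℕ → ℕ) //
        IsPartition p.1 ∧ IsPartition p.2 ∧ AlmostCross m n p.1 p.2}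
      = Nat.card {h : Fin (m + 1) → Fin (n + 2) // Monotone h} :=
        (Nat.card_congr (Equiv.ofBijective Φ hΦ)).symm
    _ = Nat.card {s : Finset (Fin (m + n + 2)) // s.card = m + 1} :=
        Nat.card_congr (Equiv.ofBijective Ψ hΨ)
    _ = Fintype.card {s : Finset (Fin (m + n + 2)) // s.card = m + 1} :=
        Nat.card_eq_fintype_card
    _ = Nat.choose (m + n + 2) (m + 1) := by
        rw [Fintype.card_finset_len, Fintype.card_fin]
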